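/- arXiv:2103.02443 — 6 statements merged into one kernel-verified Lean document; each statement's English description precedes it below -/
import Mathlib

section
/- Let a : ℕ → ℂ with a(0) = 0, and suppose there are constants C > 0 and σ ≥ 0 with |a(n)| ≤ C·n^σ for all n ≥ 1. Then for every s ∈ ℂ with Re(s) > σ + 1, the integral ∫_0^∞ y^{s−1} · (∑_{n=1}^∞ a(n)·e^{−2πny}) dy converges and equals Γ(s)·(2π)^{−s} · ∑_{n=1}^∞ a(n)·n^{−s}. -/
/-!
Expanding the series, each term contributes `∫₀^∞ y^(s-1) e^(-2πny) dy = Γ(s) (2πn)^(-s)`.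
The integrals of the absolute values of the terms are `Γ(Re s) |a(n)| (2πn)^(-Re s)`, which are
summable for `Re s > σ + 1`; this both makes the whole integrand absolutely integrable and
justifies integrating the series term by term.
-/

open MeasureTheory Complex Real Set Filter

section
variable {α E ι : Type*} [MeasurableSpace α] {μ : Measure α} [NormedAddCommGroup E]
  [CompleteSpace E] [Countable ι]

theorem MeasureTheory.integrable_tsum_of_summable_integral_norm {F : ι → α → E}
    (hF_int : ∀ i, Integrable (F i) μ) (hF_sum : Summable fun i ↦ ∫ a, ‖F i a‖ ∂μ) :
    Integrable (fun a ↦ ∑' i, F i a) μ := by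
  have hmeas i : AEMeasurable (‖F i ·‖ₑ) μ := (hF_int i).1.enorm
  have hfin : ∑' i, ∫⁻ a, ‖F i a‖ₑ ∂μ < ⊤ := by
    simp_rw [← ofReal_integral_norm_eq_lintegral_enorm (hF_int _),
      ← ENNReal.ofReal_tsum_of_nonneg (fun i ↦ integral_nonneg fun a ↦ norm_nonneg _) hF_sum]
    exact ENNReal.ofReal_lt_top
  have hsum : ∀ᵐ a ∂μ, Summable fun i ↦ F i a := by
    rw [← lintegral_tsum hmeas] at hfin
    filter_upwards [ae_lt_top' (AEMeasurable.tsum hmeas) hfin.ne] with a ha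
    exact Summable.of_norm (ENNReal.tsum_coe_ne_top_iff_summable_coe.mp ha.ne)
  refine ⟨aestronglyMeasurable_of_tendsto_ae atTop
    (fun s ↦ Finset.aestronglyMeasurable_fun_sum s fun i _ ↦ (hF_int i).1)
    (hsum.mono fun a ha ↦ ha.hasSum), ?_⟩
  calc ∫⁻ a, ‖∑' i, F i a‖ₑ ∂μ ≤ ∫⁻ a, ∑' i, ‖F i a‖ₑ ∂μ :=
        lintegral_mono fun a ↦ enorm_tsum_le_tsum_enorm
    _ = ∑' i, ∫⁻ a, ‖F i a‖ₑ ∂μ := lintegral_tsum hmeas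
    _ < ⊤ := hfin

end

lemma mellinConvergent_exp_neg_mul {s : ℂ} (hs : 0 < s.re) {p : ℝ} (hp : 0 < p) :
    MellinConvergent (fun t : ℝ ↦ (rexp (-p * t) : ℂ)) s := by
  have h : MellinConvergent (fun t : ℝ ↦ (rexp (-t) : ℂ)) s :=
    (Complex.GammaIntegral_convergent hs).congr_fun (fun t _ ↦ by simp [mul_comm])
      measurableSet_Ioi
  simpa [neg_mul] using (MellinConvergent.comp_mul_left hp).mpr h

lemma integral_norm_cpow_mul_exp_neg_mul {s : ℂ} (hs : 0 < s.re) {p : ℝ} (hp : 0 < p) :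
    ∫ t in Ioi (0 : ℝ), ‖(t : ℂ) ^ (s - 1) * rexp (-p * t)‖ = Real.Gamma s.re / p ^ s.re := by
  rw [div_eq_mul_inv, mul_comm, ← Real.inv_rpow hp.le, ← one_div,
    ← Real.integral_rpow_mul_exp_neg_mul_Ioi hs hp]
  refine setIntegral_congr_fun measurableSet_Ioi fun t ht ↦ ?_
  rw [norm_mul, norm_real, Real.norm_of_nonneg (exp_nonneg _), norm_cpow_eq_rpow_re_of_pos ht,
    sub_re, one_re, neg_mul]

theorem mellinConvergent_of_hasSum_exp_neg_mul {ι : Type*} [Countable ι] {a : ι → ℂ}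
    {p : ι → ℝ} {F : ℝ → ℂ} {s : ℂ} (hp : ∀ i, 0 < p i) (hs : 0 < s.re)
    (hF : ∀ t ∈ Ioi 0, HasSum (fun i ↦ a i * rexp (-p i * t)) (F t))
    (h_sum : Summable fun i ↦ ‖a i‖ / p i ^ s.re) :
    MellinConvergent F s := by
  refine IntegrableOn.congr_fun
    (f := fun t : ℝ ↦ ∑' i, (t : ℂ) ^ (s - 1) * (a i * rexp (-p i * t)))
    ?_ (fun t ht ↦ ((hF t ht).mul_left _).tsum_eq) measurableSet_Ioi
  refine integrable_tsum_of_summable_integral_norm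
    (fun i ↦ ((mellinConvergent_exp_neg_mul hs (hp i)).const_smul (a i)).congr_fun
      (fun t _ ↦ by ring) measurableSet_Ioi) ?_
  refine (h_sum.mul_left (Real.Gamma s.re)).congr fun i ↦ ?_
  simp_rw [mul_left_comm _ (a i), norm_mul (a i), integral_const_mul,
    integral_norm_cpow_mul_exp_neg_mul hs (hp i)]
  ring

lemma summable_succ_rpow_mul_exp_neg_mul (σ : ℝ) {r : ℝ} (hr : 0 < r) :
    Summable fun n : ℕ ↦ ((n : ℝ) + 1) ^ σ * rexp (-r * (n + 1)) := by
  have h := (summable_nat_add_iff 1).mpr (summable_pow_mul_exp_neg_nat_mul ⌈σ⌉₊ hr)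
  refine h.of_nonneg_of_le (fun n ↦ by positivity) fun n ↦ ?_
  push_cast
  gcongr
  rw [← Real.rpow_natCast]
  exact Real.rpow_le_rpow_of_exponent_le (by linarith [n.cast_nonneg (α := ℝ)]) (Nat.le_ceil σ)

lemma summable_succ_rpow (σ : ℝ) {r : ℝ} (hr : σ + 1 < r) :
    Summable fun n : ℕ ↦ ((n : ℝ) + 1) ^ (σ - r) := by
  simpa using (summable_nat_add_iff 1).mpr (Real.summable_nat_rpow.mpr (by linarith : σ - r < -1))

section
variable {b : ℕ → ℂ} {C σ : ℝ}

lemma summable_mul_exp_neg_mul_succ (hb : ∀ n : ℕ, ‖b n‖ ≤ C * ((n : ℝ) + 1) ^ σ) {r : ℝ}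
    (hr : 0 < r) : Summable fun n : ℕ ↦ b n * rexp (-r * (n + 1)) := by
  refine ((summable_succ_rpow_mul_exp_neg_mul σ hr).mul_left C).of_norm_bounded fun n ↦ ?_
  rw [norm_mul, norm_real, norm_of_nonneg (exp_nonneg _), ← mul_assoc]
  exact mul_le_mul_of_nonneg_right (hb n) (exp_nonneg _)

lemma summable_norm_div_mul_succ_rpow (hb : ∀ n : ℕ, ‖b n‖ ≤ C * ((n : ℝ) + 1) ^ σ) {c : ℝ}
    (hc : 0 < c) {r : ℝ} (hr : σ + 1 < r) :
    Summable fun n : ℕ ↦ ‖b n‖ / (c * (n + 1)) ^ r := by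
  refine ((summable_succ_rpow σ hr).mul_left (C / c ^ r)).of_nonneg_of_le
    (fun n ↦ by positivity) fun n ↦ ?_
  have hn : (0 : ℝ) < n + 1 := by positivity
  rw [Real.mul_rpow hc.le hn.le, Real.rpow_sub hn, div_le_iff₀ (by positivity)]
  calc ‖b n‖ ≤ C * ((n : ℝ) + 1) ^ σ := hb n
    _ = _ := by field_simp

end

lemma Gamma_mul_div_ofReal_two_pi_mul_cpow (s z : ℂ) {x : ℝ} (hx : 0 < x) :
    Gamma s * z / ((2 * π * x : ℝ) : ℂ) ^ s = Gamma s * (2 * π) ^ (-s) * (z * (x : ℂ) ^ (-s)) := by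
  rw [ofReal_mul, mul_cpow_ofReal_nonneg (by positivity) hx.le, cpow_neg, cpow_neg]
  push_cast
  ring

theorem stmt3_general (a : ℕ → ℂ) (C σ : ℝ) (hσ : 0 ≤ σ)
    (hbound : ∀ n : ℕ, 1 ≤ n → ‖a n‖ ≤ C * (n : ℝ) ^ σ)
    (s : ℂ) (hs : σ + 1 < s.re) :
    IntegrableOn (fun y : ℝ => (y : ℂ) ^ (s - 1) *
        ∑' n : ℕ, a (n + 1) * Complex.exp ((-(2 * Real.pi * (n + 1) * y) : ℝ) : ℂ))
      (Set.Ioi 0) ∧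
    ∫ y in Set.Ioi (0 : ℝ), (y : ℂ) ^ (s - 1) *
        ∑' n : ℕ, a (n + 1) * Complex.exp ((-(2 * Real.pi * (n + 1) * y) : ℝ) : ℂ)
      = Complex.Gamma s * (2 * (Real.pi : ℂ)) ^ (-s) *
        ∑' n : ℕ, a (n + 1) * ((n + 1 : ℕ) : ℂ) ^ (-s) := by
  set p : ℕ → ℝ := fun n ↦ 2 * π * (n + 1)
  have hp (n : ℕ) : 0 < p n := by positivity
  have hb (n : ℕ) : ‖a (n + 1)‖ ≤ C * ((n : ℝ) + 1) ^ σ := by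
    exact_mod_cast hbound (n + 1) n.succ_pos
  have hs0 : 0 < s.re := by linarith
  have hexp (n : ℕ) (t : ℝ) :
      Complex.exp ((-(2 * π * (n + 1) * t) : ℝ) : ℂ) = rexp (-p n * t) := by
    rw [ofReal_exp, neg_mul]
  have hF : ∀ t ∈ Ioi (0 : ℝ), HasSum (fun n ↦ a (n + 1) * rexp (-p n * t))
      (∑' n : ℕ, a (n + 1) * Complex.exp ((-(2 * π * (n + 1) * t) : ℝ) : ℂ)) := by
    intro t ht
    simp_rw [hexp]
    refine ((summable_mul_exp_neg_mul_succ hb (mul_pos two_pi_pos ht)).congr fun n ↦ ?_).hasSum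
    simp only [p]
    ring_nf
  have h_sum : Summable fun n ↦ ‖a (n + 1)‖ / p n ^ s.re :=
    summable_norm_div_mul_succ_rpow hb two_pi_pos hs
  refine ⟨mellinConvergent_of_hasSum_exp_neg_mul hp hs0 hF h_sum, ?_⟩
  refine (hasSum_mellin (fun n ↦ Or.inr (hp n)) hs0 hF h_sum).tsum_eq.symm.trans ?_
  rw [← tsum_mul_left]
  refine tsum_congr fun n ↦ ?_
  rw [Gamma_mul_div_ofReal_two_pi_mul_cpow s _ (by positivity : (0 : ℝ) < n + 1)]
  push_cast
  rfl

/-- The Mellin transform of a cusp form restricted to the imaginary axis: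
for coefficients of polynomial growth `|a(n)| ≤ C n^σ` and `Re(s) > σ + 1`, the integral
`∫_0^∞ y^(s-1) ∑ a(n) e^(-2πny) dy` converges and equals `Γ(s)(2π)^(-s) ∑ a(n) n^(-s)`. -/
theorem stmt3 (a : ℕ → ℂ) (ha0 : a 0 = 0) (C σ : ℝ) (hC : 0 < C) (hσ : 0 ≤ σ)
    (hbound : ∀ n : ℕ, 1 ≤ n → ‖a n‖ ≤ C * (n : ℝ) ^ σ)
    (s : ℂ) (hs : σ + 1 < s.re) :
    IntegrableOn (fun y : ℝ => (y : ℂ) ^ (s - 1) *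
        ∑' n : ℕ, a (n + 1) * Complex.exp ((-(2 * Real.pi * (n + 1) * y) : ℝ) : ℂ))
      (Set.Ioi 0) ∧
    ∫ y in Set.Ioi (0 : ℝ), (y : ℂ) ^ (s - 1) *
        ∑' n : ℕ, a (n + 1) * Complex.exp ((-(2 * Real.pi * (n + 1) * y) : ℝ) : ℂ)
      = Complex.Gamma s * (2 * (Real.pi : ℂ)) ^ (-s) *
        ∑' n : ℕ, a (n + 1) * ((n + 1 : ℕ) : ℂ) ^ (-s) :=
  stmt3_general a C σ hσ hbound s hs
end

section
/- Let N ≥ 1, let ν be a Dirichlet character modulo N with values in ℂ, and let n ≥ 1 be a natural number with gcd(n, N) = 1. Then ∑_{d ∣ n} ν(d)·conj(ν(n/d)) = ∏_{p ∈ primeFactors(n)} U_{v_p(n)}(Re ν(p)), where v_p(n) is the exponent of p in the prime factorization of n, and the right-hand side (a real number) is regarded as a complex number. -/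
/-!
Since `ν` and `conj ν` are completely multiplicative, their Dirichlet convolution is
multiplicative, so the divisor sum factors over the prime powers `p ^ k ∥ n`; there it equals
`∑_{i+j=k} z^i (conj z)^j` with `z = ν p` on the unit circle. For `z w = 1` these sums obey the
recurrence of the Vieta–Lucas polynomials `S_k` at `z + w = 2 Re z`, and `S_k (2x) = U_k x`.
-/

open Finset Polynomial

namespace Polynomial.Chebyshev

theorem S_eval_add_of_mul_eq_one {R : Type*} [CommRing R] {a b : R} (hab : a * b = 1) :
    ∀ k : ℕ, (S R k).eval (a + b) = ∑ ij ∈ antidiagonal k, a ^ ij.1 * b ^ ij.2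
  | 0 => by simp
  | 1 => by simp [Nat.antidiagonal_succ, add_comm]
  | k + 2 => by
    have step : ∀ m : ℕ, ∑ ij ∈ antidiagonal (m + 1), a ^ ij.1 * b ^ ij.2
        = b ^ (m + 1) + a * ∑ ij ∈ antidiagonal m, a ^ ij.1 * b ^ ij.2 := fun m => by
      simp only [Nat.sum_antidiagonal_succ, pow_zero, one_mul, pow_succ, mul_sum]
      congr 1
      exact sum_congr rfl fun _ _ => by ring
    have ih₁ := S_eval_add_of_mul_eq_one hab (k + 1)
    have ih₀ := S_eval_add_of_mul_eq_one hab k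
    push_cast at ih₁ ⊢
    rw [S_add_two, eval_sub, eval_mul, eval_X, ih₁, ih₀, step (k + 1), step k]
    linear_combination (∑ ij ∈ antidiagonal k, a ^ ij.1 * b ^ ij.2) * hab

theorem U_eval_eq_S_eval_two_mul {R : Type*} [CommRing R] (n : ℤ) (x : R) :
    (U R n).eval x = (S R n).eval (2 * x) := by
  rw [← S_comp_two_mul_X, eval_comp, eval_mul, eval_X, eval_ofNat]

end Polynomial.Chebyshev

open Polynomial.Chebyshev in
theorem Complex.ofReal_U_eval_re_eq_sum {z : ℂ} (hz : ‖z‖ = 1) (k : ℕ) :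
    (((U ℝ k).eval z.re : ℝ) : ℂ)
      = ∑ ij ∈ antidiagonal k, z ^ ij.1 * (starRingEnd ℂ) z ^ ij.2 := by
  have hzz : z * (starRingEnd ℂ) z = 1 := by
    rw [Complex.mul_conj, Complex.normSq_eq_norm_sq, hz]; norm_num
  have hre : 2 * (z.re : ℂ) = z + (starRingEnd ℂ) z := by rw [Complex.add_conj]; push_cast; rfl
  rw [← Complex.coe_algebraMap, algebraMap_eval_U, U_eval_eq_S_eval_two_mul,
    Complex.coe_algebraMap, hre, S_eval_add_of_mul_eq_one hzz]

namespace DirichletCharacter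

variable {R : Type*} [CommRing R] {N : ℕ} (χ ψ : DirichletCharacter R N)

theorem toArithmeticFunction_mul_apply {n : ℕ} (hn : n ≠ 0) :
    (toArithmeticFunction (χ ·) * toArithmeticFunction (ψ ·)) n
      = ∑ d ∈ n.divisors, χ d * ψ (n / d : ℕ) := by
  rw [ArithmeticFunction.mul_apply, Nat.sum_divisorsAntidiagonal
    (fun a b => toArithmeticFunction (χ ·) a * toArithmeticFunction (ψ ·) b)]
  refine sum_congr rfl fun d hd => ?_
  obtain ⟨hdn, -⟩ := Nat.mem_divisors.mp hd
  have hd0 : d ≠ 0 := ne_zero_of_dvd_ne_zero hn hdn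
  rw [← apply_eq_toArithmeticFunction_apply _ hd0,
    ← apply_eq_toArithmeticFunction_apply _ ((Nat.div_ne_zero_iff_of_dvd hdn).mpr ⟨hn, hd0⟩)]

theorem toArithmeticFunction_mul_apply_prime_pow {p : ℕ} (hp : p.Prime) (k : ℕ) :
    (toArithmeticFunction (χ ·) * toArithmeticFunction (ψ ·)) (p ^ k)
      = ∑ ij ∈ antidiagonal k, χ p ^ ij.1 * ψ p ^ ij.2 := by
  rw [toArithmeticFunction_mul_apply χ ψ (pow_ne_zero k hp.ne_zero),
    Nat.sum_divisors_prime_pow hp,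
    Nat.sum_antidiagonal_eq_sum_range_succ (fun i j => χ p ^ i * ψ p ^ j)]
  refine sum_congr rfl fun i hi => ?_
  rw [Nat.pow_div (Nat.lt_succ_iff.mp (mem_range.mp hi)) hp.pos]
  push_cast
  rw [map_pow, map_pow]

end DirichletCharacter

theorem DirichletCharacter.norm_natCast_eq_one {F : Type*} [NormedField F] {N : ℕ}
    (χ : DirichletCharacter F N) {m : ℕ} (hm : m.Coprime N) : ‖χ m‖ = 1 := by
  simpa using χ.unit_norm_eq_one ((ZMod.isUnit_iff_coprime m N).mpr hm).unit

theorem stmt5_general (N : ℕ) (ν : DirichletCharacter ℂ N) (n : ℕ) (hn : 1 ≤ n)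
    (hcop : Nat.gcd n N = 1) :
    ∑ d ∈ n.divisors, ν (d : ZMod N) * (starRingEnd ℂ) (ν ((n / d : ℕ) : ZMod N))
      = ∏ p ∈ n.primeFactors,
          (((Polynomial.Chebyshev.U ℝ (n.factorization p : ℤ)).eval
            (ν ((p : ℕ) : ZMod N)).re : ℝ) : ℂ) := by
  have hn0 : n ≠ 0 := Nat.one_le_iff_ne_zero.mp hn
  set νbar : DirichletCharacter ℂ N := ν.ringHomComp (starRingEnd ℂ)
  have hmul :=
    ν.isMultiplicative_toArithmeticFunction.mul νbar.isMultiplicative_toArithmeticFunction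
  refine (ν.toArithmeticFunction_mul_apply νbar hn0).symm.trans ?_
  rw [hmul.multiplicative_factorization _ hn0, Nat.prod_factorization_eq_prod_primeFactors]
  refine prod_congr rfl fun p hp => ?_
  obtain ⟨hpp, hpn, -⟩ := Nat.mem_primeFactors.mp hp
  have hνp : ‖ν p‖ = 1 := ν.norm_natCast_eq_one (Nat.Coprime.coprime_dvd_left hpn hcop)
  rw [ν.toArithmeticFunction_mul_apply_prime_pow νbar hpp, Complex.ofReal_U_eval_re_eq_sum hνp]
  rfl

/-- The convolution coefficients of `L(s,ν)·L(s,conj ν)`: for `n` coprime to the level,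
`∑_{d ∣ n} ν(d) conj(ν(n/d)) = ∏_{p ∣ n} U_{v_p(n)}(Re ν(p))`, where `U_m` is the `m`-th
Chebyshev polynomial of the second kind. -/
theorem stmt5 (N : ℕ) (hN : 1 ≤ N) (ν : DirichletCharacter ℂ N) (n : ℕ) (hn : 1 ≤ n)
    (hcop : Nat.gcd n N = 1) :
    ∑ d ∈ n.divisors, ν (d : ZMod N) * (starRingEnd ℂ) (ν ((n / d : ℕ) : ZMod N))
      = ∏ p ∈ n.primeFactors,
          (((Polynomial.Chebyshev.U ℝ (n.factorization p : ℤ)).eval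
            (ν ((p : ℕ) : ZMod N)).re : ℝ) : ℂ) :=
  stmt5_general N ν n hn hcop
end

section
/- Let N > 1 and let ν be a primitive even Dirichlet character modulo N with values in ℂ (even means ν(−1) = 1). Then for every real y > 0, ∑_{n∈ℤ} ν(n)·exp(−πn²/(Ny)) = (√y · τ(ν)/√N) · ∑_{n∈ℤ} conj(ν(n))·exp(−πn²y/N), where τ(ν) = ∑_{m=0}^{N−1} ν(m)·e^{2πim/N} is the Gauss sum of ν. -/
/-!
Splitting `n` into residue classes mod `N` writes the theta series of any `Φ : ZMod N → ℂ` at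
`1/y` as `∑ₐ Φ a` times shifted Gaussian sums; Poisson summation turns each of these into a
Gaussian twisted by `n ↦ e(-an/N)`, and summing over `a` reassembles the theta series of the
discrete Fourier transform `𝓕 Φ` at `y`. For primitive `ν` one has `𝓕 ν k = ν⁻¹ (-k) τ(ν)`, and
evenness turns `ν⁻¹ (-k)` into `conj (ν k)`.
-/

open Complex Finset Real ZMod

lemma tsum_int_eq_sum_zmod_tsum {E : Type*} [NormedAddCommGroup E] [CompleteSpace E]
    (N : ℕ) [NeZero N] {f : ℤ → E} (hf : Summable f) :
    ∑' n, f n = ∑ a : ZMod N, ∑' m : ℤ, f (m * N + a.val) := by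
  let e : Fin N × ℤ ≃ ℤ := (Equiv.prodComm _ _).trans (Int.divModEquiv N).symm
  have hfe : Summable fun p ↦ f (e p) := hf.comp_injective e.injective
  rw [← e.tsum_eq, hfe.tsum_prod' fun j ↦ hfe.comp_injective (Prod.mk_right_injective j),
    tsum_fintype]
  -- for `N = n + 1`, `ZMod N` is `Fin N` and `ZMod.val` is `Fin.val`
  obtain ⟨n, rfl⟩ : ∃ n, N = n + 1 := Nat.exists_eq_add_one.mpr (NeZero.pos N)
  rfl

lemma tsum_cexp_mul_gaussian (x : ℝ) {t : ℝ} (ht : 0 < t) :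
    ∑' n : ℤ, cexp (-2 * π * I * x * n) * (rexp (-π * t * n ^ 2) : ℂ) =
      1 / √t * ∑' n : ℤ, (rexp (-π * (n + x) ^ 2 / t) : ℂ) := by
  have h := tsum_exp_neg_quadratic (a := t) (by simpa using ht) (-I * x)
  have hsqrt : (t : ℂ) ^ (1 / 2 : ℂ) = (√t : ℂ) := by
    rw [sqrt_eq_rpow, ofReal_cpow ht.le]; norm_num
  rw [hsqrt] at h
  convert h using 4 with n n
  · rw [ofReal_exp, ← Complex.exp_add]; push_cast; ring_nf
  · rw [ofReal_exp]; congr 1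
    have : I * (-I * x) = x := by rw [← mul_assoc, mul_neg, I_mul_I]; ring
    rw [this]; push_cast; ring

section

variable {N : ℕ} [NeZero N]

lemma summable_zmod_mul_gaussian (Φ : ZMod N → ℂ) {t : ℝ} (ht : 0 < t) :
    Summable fun n : ℤ ↦ Φ n * (rexp (-π * t * n ^ 2) : ℂ) := by
  have hg : Summable fun n : ℤ ↦ rexp (-π * t * n ^ 2) := by
    simpa [mul_assoc] using summable_pow_mul_jacobiTheta₂_term_bound 0 ht 0
  refine (hg.mul_left (∑ a, ‖Φ a‖)).of_norm_bounded fun n ↦ ?_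
  rw [norm_mul, norm_real, norm_of_nonneg (exp_pos _).le]
  gcongr
  exact single_le_sum (fun a _ ↦ norm_nonneg (Φ a)) (mem_univ _)

lemma tsum_stdAddChar_mul_gaussian (a : ZMod N) {y : ℝ} (hy : 0 < y) :
    ∑' n : ℤ, stdAddChar (-(a * (n : ZMod N))) * (rexp (-π * n ^ 2 * y / N) : ℂ) =
      √N / √y * ∑' m : ℤ, (rexp (-π * (m * N + a.val) ^ 2 / (N * y)) : ℂ) := by
  have hN : (0 : ℝ) < N := by exact_mod_cast NeZero.pos N
  have h := tsum_cexp_mul_gaussian (a.val / N) (div_pos hy hN)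
  rw [sqrt_div hy.le, ofReal_div (√y), one_div_div] at h
  convert h using 4 with n m
  · rw [show -(a * n) = ((-(a.val * n) : ℤ) : ZMod N) by push_cast [natCast_zmod_val]; ring,
      stdAddChar_coe]
    congr 1; push_cast; ring
  · congr 2; ring
  · congr 2
    field_simp

theorem tsum_zmod_mul_gaussian_eq_dft (Φ : ZMod N → ℂ) {y : ℝ} (hy : 0 < y) :
    ∑' n : ℤ, Φ n * (rexp (-π * n ^ 2 / (N * y)) : ℂ) =
      √y / √N * ∑' n : ℤ, 𝓕 Φ n * (rexp (-π * n ^ 2 * y / N) : ℂ) := by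
  have hN : (0 : ℝ) < N := by exact_mod_cast NeZero.pos N
  set G : ZMod N → ℂ := fun a ↦ ∑' m : ℤ, (rexp (-π * (m * N + a.val) ^ 2 / (N * y)) : ℂ)
  have hL : ∑' n : ℤ, Φ n * (rexp (-π * n ^ 2 / (N * y)) : ℂ) = ∑ a, Φ a * G a := by
    have hsum := summable_zmod_mul_gaussian Φ (one_div_pos.mpr (mul_pos hN hy))
    rw [tsum_int_eq_sum_zmod_tsum N (hsum.congr fun n ↦ by congr 3; ring)]
    refine sum_congr rfl fun a _ ↦ ?_
    rw [← tsum_mul_left]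
    congr 1 with m
    push_cast
    simp
  have hR : ∑' n : ℤ, 𝓕 Φ n * (rexp (-π * n ^ 2 * y / N) : ℂ) = √N / √y * ∑ a, Φ a * G a := by
    simp_rw [dft_apply, smul_eq_mul, sum_mul]
    rw [Summable.tsum_finsetSum fun a _ ↦ ?_]
    · simp_rw [mul_right_comm _ (Φ _), tsum_mul_right, tsum_stdAddChar_mul_gaussian _ hy, mul_sum]
      exact sum_congr rfl fun a _ ↦ by ring
    · convert (summable_zmod_mul_gaussian (fun k ↦ stdAddChar (-(a * k)) * Φ a)
        (div_pos hy hN)) using 3 with n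
      push_cast; ring_nf
  have hy' : (√y : ℂ) ≠ 0 := by exact_mod_cast (sqrt_pos.mpr hy).ne'
  have hN' : (√N : ℂ) ≠ 0 := by exact_mod_cast (sqrt_pos.mpr hN).ne'
  rw [hL, hR]
  field_simp

lemma DirichletCharacter.IsPrimitive.fourierTransform_eq_gaussSum_mul_conj
    {χ : DirichletCharacter ℂ N} (hχ : χ.IsPrimitive) (heven : χ.Even) (k : ZMod N) :
    𝓕 χ k = gaussSum χ stdAddChar * starRingEnd ℂ (χ k) := by
  rw [hχ.fourierTransform_eq_inv_mul_gaussSum, mul_comm, ← MulChar.star_apply', heven.eval_neg]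
  rfl

lemma gaussSum_stdAddChar_eq_sum_range (χ : MulChar (ZMod N) ℂ) :
    gaussSum χ stdAddChar = ∑ m ∈ range N, χ m * cexp (2 * π * I * m / N) := by
  refine sum_nbij' (fun a ↦ a.val) (fun m ↦ m) (fun a _ ↦ mem_range.mpr a.val_lt)
    (fun _ _ ↦ mem_univ _) (fun a _ ↦ natCast_zmod_val a)
    (fun m hm ↦ val_cast_of_lt (mem_range.mp hm)) fun a _ ↦ ?_
  rw [stdAddChar_apply, toCircle_apply, natCast_zmod_val]

end

/-- Modular transformation of the ϑ-series of a primitive even Dirichlet character under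
`y → 1/y`: `ϑ(i/y, ν) = (√y τ(ν)/√N) ϑ(iy, conj ν)`, with `τ(ν)` the Gauss sum. -/
theorem stmt10 (N : ℕ) (hN : 1 < N) (ν : DirichletCharacter ℂ N)
    (hprim : ν.IsPrimitive) (heven : ν (-1) = 1) (y : ℝ) (hy : 0 < y) :
    ∑' n : ℤ, ν (n : ZMod N) * ((Real.exp (-Real.pi * (n : ℝ) ^ 2 / (N * y)) : ℝ) : ℂ)
      = (Real.sqrt y : ℂ) *
          (∑ m ∈ Finset.range N, ν (m : ZMod N) *
            Complex.exp (2 * Real.pi * Complex.I * m / N)) / (Real.sqrt N : ℂ) *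
        ∑' n : ℤ, (starRingEnd ℂ) (ν (n : ZMod N)) *
          ((Real.exp (-Real.pi * (n : ℝ) ^ 2 * y / N) : ℝ) : ℂ) := by
  have : NeZero N := ⟨by omega⟩
  rw [tsum_zmod_mul_gaussian_eq_dft ν hy, ← gaussSum_stdAddChar_eq_sum_range]
  simp_rw [hprim.fourierTransform_eq_gaussSum_mul_conj heven, mul_assoc, tsum_mul_left]
  ring
end

section
/- Let N > 1 and let ν be a primitive even Dirichlet character modulo N with values in ℂ (even means ν(−1) = 1). Define Θ(y) = ∑_{n∈ℤ} ν(n)·exp(−πn²y/N) and Θ̄(y) = ∑_{n∈ℤ} conj(ν(n))·exp(−πn²y/N) for y > 0, and set G(y) = ∫_0^∞ Θ(y·y')·Θ̄(y/y') dy'/y'. Then the integral defining G(y) converges for every y > 0, and G(1/y) = y·G(y) for every y > 0. -/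
/-!
Splitting `n` into residue classes mod `N` writes `Θ` as a combination of the even Hurwitz kernels
`∑_q exp(-π (q + j/N)² t)`. Their Jacobi functional equation, combined with the discrete Fourier
transform `𝓕 ν (-k) = τ(ν) conj (ν k)` of a primitive character, gives
`Θ(1/y) = √(y/N) τ(ν) Θbar(y)`. Substituting this (and its conjugate) into the integrand of
`G(1/y)` and using `τ(ν) conj τ(ν) = N` yields `y` times the integrand of `G(y)`.
The integral converges because `ν 0 = 0` and `∑ ν = 0` make both theta series decay at `∞` and
stay bounded at `0`, so it is a Mellin transform at `s = 0` of a function with power decay at both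
ends.
-/

open MeasureTheory Complex ComplexConjugate Filter Asymptotics Topology HurwitzZeta ZMod

lemma integrableOn_mul_comp_mul_comp_div {θ₁ θ₂ : ℝ → ℂ}
    (hc₁ : ContinuousOn θ₁ (Set.Ioi 0)) (hc₂ : ContinuousOn θ₂ (Set.Ioi 0))
    (h₁ : θ₁ =O[atTop] (·⁻¹)) (h₁' : θ₁ =O[𝓝[>] 0] (fun _ ↦ (1 : ℝ)))
    (h₂ : θ₂ =O[atTop] (·⁻¹)) (h₂' : θ₂ =O[𝓝[>] 0] (fun _ ↦ (1 : ℝ))) {y : ℝ} (hy : 0 < y) :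
    IntegrableOn (fun t : ℝ ↦ θ₁ (y * t) * θ₂ (y / t) / t) (Set.Ioi 0) := by
  have hmul_top : Tendsto (fun t ↦ y * t) atTop atTop := tendsto_id.const_mul_atTop hy
  have hdiv_bot : Tendsto (fun t ↦ y / t) (𝓝[>] 0) atTop := by
    simpa only [div_eq_mul_inv] using tendsto_inv_nhdsGT_zero.const_mul_atTop hy
  have hmul_bot : Tendsto (fun t ↦ y * t) (𝓝[>] 0) (𝓝[>] 0) := by
    refine tendsto_nhdsWithin_iff.mpr ⟨?_, ?_⟩
    · simpa using ((continuous_const_mul y).tendsto 0).mono_left nhdsWithin_le_nhds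
    · filter_upwards [self_mem_nhdsWithin] with t (ht : 0 < t) using mul_pos hy ht
  have hdiv_top : Tendsto (fun t ↦ y / t) atTop (𝓝[>] 0) :=
    tendsto_nhdsWithin_iff.mpr ⟨tendsto_const_nhds.div_atTop tendsto_id,
      (eventually_gt_atTop 0).mono fun t ht ↦ div_pos hy ht⟩
  have hcont : ContinuousOn (fun t : ℝ ↦ θ₁ (y * t) * θ₂ (y / t)) (Set.Ioi 0) :=
    (hc₁.comp (continuousOn_const.mul continuousOn_id) fun t (ht : 0 < t) ↦ mul_pos hy ht).mul
      (hc₂.comp (continuousOn_const.div continuousOn_id fun t (ht : 0 < t) ↦ ht.ne')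
        fun t (ht : 0 < t) ↦ div_pos hy ht)
  have htop : (fun t : ℝ ↦ θ₁ (y * t) * θ₂ (y / t)) =O[atTop] (· ^ (-1 : ℝ)) := by
    refine ((h₁.comp_tendsto hmul_top).mul (h₂'.comp_tendsto hdiv_top)).trans ?_
    refine ((isBigO_refl _ _).const_mul_left y⁻¹).congr' ?_ EventuallyEq.rfl
    filter_upwards [eventually_gt_atTop 0] with t ht
    simp [Real.rpow_neg_one, mul_comm]
  have hbot : (fun t : ℝ ↦ θ₁ (y * t) * θ₂ (y / t)) =O[𝓝[>] 0] (· ^ (-(-1) : ℝ)) := by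
    refine ((h₁'.comp_tendsto hmul_bot).mul (h₂.comp_tendsto hdiv_bot)).trans ?_
    refine ((isBigO_refl _ _).const_mul_left y⁻¹).congr' ?_ EventuallyEq.rfl
    filter_upwards [self_mem_nhdsWithin] with t (ht : 0 < t)
    simp [div_eq_mul_inv, mul_comm]
  have hmellin : MellinConvergent (fun t : ℝ ↦ θ₁ (y * t) * θ₂ (y / t)) 0 :=
    mellinConvergent_of_isBigO_rpow (hcont.locallyIntegrableOn measurableSet_Ioi) htop
      (by norm_num) hbot (by norm_num)
  refine hmellin.congr_fun (fun t _ ↦ ?_) measurableSet_Ioi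
  simp [cpow_neg_one, div_eq_inv_mul]

lemma fePair_integrand_one_div {θ θ' : ℝ → ℂ} {c c' : ℂ} {N : ℝ} (hN : 0 < N)
    (hcc : c * c' = N) (hfe : ∀ u, 0 < u → θ (1 / u) = √(u / N) * c * θ' u)
    (hfe' : ∀ u, 0 < u → θ' (1 / u) = √(u / N) * c' * θ u) {y t : ℝ} (hy : 0 < y) (ht : 0 < t) :
    θ (1 / y * t) * θ' (1 / y / t) / t = y * (θ (y * t) * θ' (y / t) / t) := by
  have hsqrt : √(y / t / N) * √(y * t / N) * N = y := by
    rw [← Real.sqrt_mul (by positivity), show y / t / N * (y * t / N) = (y / N) ^ 2 by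
      field_simp, Real.sqrt_sq (by positivity)]
    field_simp
  rw [show 1 / y * t = 1 / (y / t) by field_simp, div_div, hfe _ (by positivity),
    hfe' _ (by positivity), ← ofReal_inj.mpr hsqrt]
  push_cast
  rw [← hcc]
  ring

namespace ZMod

variable {N : ℕ}

noncomputable def thetaSeries (Φ : ZMod N → ℂ) (x : ℝ) : ℂ :=
  ∑' n : ℤ, Φ n * ((Real.exp (-Real.pi * (n : ℝ) ^ 2 * x / N) : ℝ) : ℂ)

lemma thetaSeries_const_mul (c : ℂ) (Φ : ZMod N → ℂ) (x : ℝ) :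
    thetaSeries (fun k ↦ c * Φ k) x = c * thetaSeries Φ x := by
  simp only [thetaSeries, mul_assoc, tsum_mul_left]

lemma thetaSeries_conj (Φ : ZMod N → ℂ) (x : ℝ) :
    thetaSeries (fun k ↦ conj (Φ k)) x = conj (thetaSeries Φ x) := by
  simp only [thetaSeries, conj_tsum, map_mul, conj_ofReal]

variable [NeZero N]

lemma hasSum_int_of_hasSum_residueClass {E : Type*} [AddCommMonoid E] [TopologicalSpace E]
    [ContinuousAdd E] {f : ℤ → E} {g : ZMod N → E}
    (hf : ∀ j : ZMod N, HasSum (fun q : ℤ ↦ f (N * q + j.val)) (g j)) :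
    HasSum f (∑ j, g j) := by
  have hclass (j : ZMod N) : HasSum (fun n : ℤ ↦ if (n : ZMod N) = j then f n else 0) (g j) := by
    have hinj : Function.Injective (fun q : ℤ ↦ (N * q + j.val : ℤ)) := fun a b hab ↦ by
      simpa [NeZero.ne N] using hab
    rw [← hinj.hasSum_iff]
    · convert hf j using 2 with q
      simp
    · rintro n hn
      rw [if_neg]
      rintro rfl
      refine hn ⟨(n - (n : ZMod N).val) / N, ?_⟩
      rw [ZMod.val_intCast, Int.emod_def, sub_sub_cancel,
        Int.mul_ediv_cancel_left _ (by exact_mod_cast NeZero.ne N)]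
      ring
  simpa only [Finset.sum_ite_eq, Finset.mem_univ, if_true] using
    hasSum_sum (s := Finset.univ) fun j _ ↦ hclass j

lemma hasSum_thetaSeries_evenKernel (Φ : ZMod N → ℂ) {x : ℝ} (hx : 0 < x) :
    HasSum (fun n : ℤ ↦ Φ n * ((Real.exp (-Real.pi * (n : ℝ) ^ 2 * x / N) : ℝ) : ℂ))
      (∑ j, Φ j * evenKernel (toAddCircle j) (N * x)) := by
  have hN : (0 : ℝ) < N := Nat.cast_pos.mpr (NeZero.pos N)
  refine hasSum_int_of_hasSum_residueClass fun j ↦ ?_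
  rw [toAddCircle_apply]
  refine ((hasSum_ofReal.mpr (hasSum_int_evenKernel _ (by positivity))).mul_left (Φ j)).congr_fun
    fun q ↦ ?_
  have hj : (((N * q + j.val : ℤ)) : ZMod N) = j := by simp
  rw [hj]
  congr 3
  push_cast
  field_simp

lemma hasSum_thetaSeries_dft_cosKernel (Φ : ZMod N → ℂ) {x : ℝ} (hx : 0 < x) :
    HasSum (fun m : ℤ ↦ 𝓕 Φ (-m) * ((Real.exp (-Real.pi * (m : ℝ) ^ 2 * x / N) : ℝ) : ℂ))
      (∑ j, Φ j * cosKernel (toAddCircle j) (x / N)) := by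
  have hchar (j : ZMod N) (m : ℤ) :
      stdAddChar (-(j * -(m : ZMod N))) = cexp (2 * Real.pi * I * (j.val / N : ℝ) * m) := by
    rw [show -(j * -(m : ZMod N)) = ((j.val * m : ℤ) : ZMod N) by simp, stdAddChar_coe]
    push_cast
    ring_nf
  simp only [toAddCircle_apply]
  refine (hasSum_sum fun j _ ↦
    (hasSum_int_cosKernel ((j : ZMod N).val / N : ℝ) (t := x / N)
      (div_pos hx (Nat.cast_pos.mpr (NeZero.pos N)))).mul_left (Φ j)).congr_fun fun m ↦ ?_
  simp only [dft_apply, smul_eq_mul, hchar, Finset.sum_mul]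
  refine Finset.sum_congr rfl fun j _ ↦ ?_
  rw [mul_div_assoc]
  ring

theorem thetaSeries_one_div (Φ : ZMod N → ℂ) {y : ℝ} (hy : 0 < y) :
    thetaSeries Φ (1 / y) = √(y / N) * thetaSeries (fun k ↦ 𝓕 Φ (-k)) y := by
  have hN : (0 : ℝ) < N := Nat.cast_pos.mpr (NeZero.pos N)
  have hdual : 1 / (N * (1 / y)) = y / N := by field_simp
  have hsqrt : 1 / (N * (1 / y)) ^ (1 / 2 : ℝ) = √(y / N) := by
    rw [← hdual, Real.sqrt_eq_rpow, Real.div_rpow zero_le_one (by positivity), Real.one_rpow]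
  rw [thetaSeries, thetaSeries, (hasSum_thetaSeries_evenKernel Φ (one_div_pos.mpr hy)).tsum_eq,
    (hasSum_thetaSeries_dft_cosKernel Φ hy).tsum_eq, Finset.mul_sum]
  refine Finset.sum_congr rfl fun j _ ↦ ?_
  rw [evenKernel_functional_equation, hdual, hsqrt]
  push_cast
  ring

lemma eqOn_thetaSeries_evenKernel (Φ : ZMod N → ℂ) :
    Set.EqOn (thetaSeries Φ) (fun x ↦ ∑ j, Φ j * evenKernel (toAddCircle j) (N * x))
      (Set.Ioi 0) :=
  fun _ hx ↦ (hasSum_thetaSeries_evenKernel Φ hx).tsum_eq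

lemma continuousOn_thetaSeries (Φ : ZMod N → ℂ) : ContinuousOn (thetaSeries Φ) (Set.Ioi 0) := by
  refine ContinuousOn.congr ?_ (eqOn_thetaSeries_evenKernel Φ)
  refine continuousOn_finsetSum _ fun j _ ↦ continuousOn_const.mul
    (continuous_ofReal.comp_continuousOn ((continuousOn_evenKernel _).comp
      (continuousOn_const.mul continuousOn_id) fun x hx ↦ ?_))
  exact mul_pos (Nat.cast_pos.mpr (NeZero.pos N)) (Set.mem_Ioi.mp hx)

lemma isBigO_atTop_thetaSeries (Φ : ZMod N → ℂ) (hΦ : Φ 0 = 0) :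
    thetaSeries Φ =O[atTop] (·⁻¹) := by
  have hN : (0 : ℝ) < N := Nat.cast_pos.mpr (NeZero.pos N)
  refine IsBigO.congr' ?_ ((eventually_gt_atTop 0).mono fun x hx ↦
    (eqOn_thetaSeries_evenKernel Φ hx).symm) EventuallyEq.rfl
  refine IsBigO.fun_sum fun j _ ↦ ?_
  rcases eq_or_ne j 0 with rfl | hj
  · simpa [hΦ] using isBigO_zero _ _
  -- for `j ≠ 0` the kernel `evenKernel (j / N)` has no constant term at `∞`
  obtain ⟨p, hp, hdecay⟩ := isBigO_atTop_evenKernel_sub (toAddCircle j)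
  simp only [toAddCircle_eq_zero, hj, if_false, sub_zero] at hdecay
  have hexp : (fun x : ℝ ↦ Real.exp (-p * (N * x))) =O[atTop] (·⁻¹) := by
    simpa [Real.rpow_neg_one, mul_assoc] using
      (isLittleO_exp_neg_mul_rpow_atTop (mul_pos hp hN) (-1)).isBigO
  exact (isBigO_ofReal_left.mpr
    ((hdecay.comp_tendsto (tendsto_id.const_mul_atTop hN)).trans hexp)).const_mul_left _

lemma isBigO_nhdsGT_zero_thetaSeries (Φ : ZMod N → ℂ) (hΦ : ∑ j, Φ j = 0) :
    thetaSeries Φ =O[𝓝[>] 0] (fun _ ↦ (1 : ℝ)) := by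
  -- the dual series `∑ 𝓕 Φ (-n) exp(-π n² x / N)` decays at `∞` since `𝓕 Φ 0 = ∑ Φ = 0`
  have hdual : (fun x : ℝ ↦ thetaSeries (fun k ↦ 𝓕 Φ (-k)) x⁻¹) =O[𝓝[>] 0] (·⁻¹⁻¹) :=
    (isBigO_atTop_thetaSeries _ (by rwa [neg_zero, dft_apply_zero])).comp_tendsto
      tendsto_inv_nhdsGT_zero
  have hsqrt : (fun x : ℝ ↦ ((√(x⁻¹ / N) : ℝ) : ℂ)) =O[𝓝[>] 0] (fun x ↦ √(x⁻¹ / N)) :=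
    isBigO_ofReal_left.mpr (isBigO_refl _ _)
  have hbound : (fun x : ℝ ↦ √(x⁻¹ / N) * x⁻¹⁻¹) =O[𝓝[>] 0] (fun _ ↦ (1 : ℝ)) := by
    refine IsBigO.congr' (f₁ := fun x ↦ √(x / N)) ?_ ?_ EventuallyEq.rfl
    · exact ((Real.continuous_sqrt.comp (continuous_id.div_const _)).tendsto 0).isBigO_one ℝ
        |>.mono nhdsWithin_le_nhds
    · filter_upwards [self_mem_nhdsWithin] with x (hx : 0 < x)
      rw [inv_inv, ← Real.sqrt_sq hx.le, ← Real.sqrt_mul (by positivity), Real.sqrt_sq hx.le]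
      congr 1
      field_simp
  refine ((hsqrt.mul hdual).trans hbound).congr' ?_ EventuallyEq.rfl
  filter_upwards [self_mem_nhdsWithin] with x (hx : 0 < x)
  rw [← thetaSeries_one_div Φ (inv_pos.mpr hx), one_div, inv_inv]

lemma integrableOn_thetaSeries_mul_thetaSeries {Φ Ψ : ZMod N → ℂ} (hΦ₀ : Φ 0 = 0)
    (hΦ : ∑ j, Φ j = 0) (hΨ₀ : Ψ 0 = 0) (hΨ : ∑ j, Ψ j = 0) {y : ℝ} (hy : 0 < y) :
    IntegrableOn (fun t : ℝ ↦ thetaSeries Φ (y * t) * thetaSeries Ψ (y / t) / t) (Set.Ioi 0) :=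
  integrableOn_mul_comp_mul_comp_div (continuousOn_thetaSeries Φ) (continuousOn_thetaSeries Ψ)
    (isBigO_atTop_thetaSeries Φ hΦ₀) (isBigO_nhdsGT_zero_thetaSeries Φ hΦ)
    (isBigO_atTop_thetaSeries Ψ hΨ₀) (isBigO_nhdsGT_zero_thetaSeries Ψ hΨ) hy

end ZMod

namespace DirichletCharacter

variable {N : ℕ} [NeZero N] {χ : DirichletCharacter ℂ N}

lemma IsPrimitive.gaussSum_inv_mul_gaussSum (hχ : χ.IsPrimitive) :
    gaussSum χ⁻¹ stdAddChar * gaussSum χ stdAddChar = χ (-1) * N := by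
  -- Fourier inversion `𝓕 (𝓕 χ) 1 = N χ (-1)`, computed with `𝓕 χ k = χ⁻¹ (-k) τ(χ)`.
  have h := congr_fun (dft_dft (χ : ZMod N → ℂ)) 1
  rw [funext hχ.fourierTransform_eq_inv_mul_gaussSum, dft_mul_const, dft_comp_neg ⇑χ⁻¹] at h
  dsimp only at h
  rw [fourierTransform_eq_gaussSum_mulShift, neg_neg, AddChar.mulShift_one, smul_eq_mul] at h
  rw [h, mul_comm]

lemma IsPrimitive.gaussSum_mul_conj_gaussSum (hχ : χ.IsPrimitive) :
    gaussSum χ stdAddChar * conj (gaussSum χ stdAddChar) = N := by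
  -- `conj τ(χ) = τ(χ⁻¹, ψ⁻¹) = χ (-1) τ(χ⁻¹)`, and `χ (-1) ^ 2 = 1`
  have hshift := gaussSum_mulShift_eq χ⁻¹ stdAddChar (-1)
  rw [Units.val_neg, Units.val_one, inv_inv] at hshift
  rw [← Complex.star_def, star_gaussSum_eq, AddChar.inv_mulShift, hshift, mul_left_comm,
    mul_comm (gaussSum χ _), hχ.gaussSum_inv_mul_gaussSum, ← mul_assoc, ← map_mul, neg_one_mul,
    neg_neg, map_one, one_mul]

lemma IsPrimitive.sum_eq_zero (hχ : χ.IsPrimitive) (hN : N ≠ 1) : ∑ j, χ j = 0 :=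
  χ.sum_eq_zero_of_ne_one fun h ↦ hN (by rwa [IsPrimitive, h, conductor_one, eq_comm] at hχ)

lemma IsPrimitive.thetaSeries_one_div (hχ : χ.IsPrimitive) {y : ℝ} (hy : 0 < y) :
    thetaSeries χ (1 / y) =
      √(y / N) * gaussSum χ stdAddChar * thetaSeries (fun k ↦ conj (χ k)) y := by
  rw [ZMod.thetaSeries_one_div _ hy, mul_assoc, ← thetaSeries_const_mul (gaussSum χ stdAddChar)]
  congr 2
  funext k
  rw [hχ.fourierTransform_eq_inv_mul_gaussSum, neg_neg, ← MulChar.star_apply', Complex.star_def,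
    mul_comm]

lemma IsPrimitive.thetaSeries_conj_one_div (hχ : χ.IsPrimitive) {y : ℝ} (hy : 0 < y) :
    thetaSeries (fun k ↦ conj (χ k)) (1 / y) =
      √(y / N) * conj (gaussSum χ stdAddChar) * thetaSeries χ y := by
  rw [thetaSeries_conj, hχ.thetaSeries_one_div hy, map_mul, map_mul, conj_ofReal,
    thetaSeries_conj, conj_conj]

end DirichletCharacter

theorem stmt12_general (N : ℕ) (hN : 1 < N) (ν : DirichletCharacter ℂ N)
    (hprim : ν.IsPrimitive)
    (Θ Θbar G : ℝ → ℂ)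
    (hΘ : ∀ y : ℝ, Θ y = ∑' n : ℤ, ν (n : ZMod N) *
      ((Real.exp (-Real.pi * (n : ℝ) ^ 2 * y / N) : ℝ) : ℂ))
    (hΘbar : ∀ y : ℝ, Θbar y = ∑' n : ℤ, (starRingEnd ℂ) (ν (n : ZMod N)) *
      ((Real.exp (-Real.pi * (n : ℝ) ^ 2 * y / N) : ℝ) : ℂ))
    (hG : ∀ y : ℝ, G y = ∫ y' in Set.Ioi (0 : ℝ), Θ (y * y') * Θbar (y / y') / (y' : ℂ)) :
    (∀ y : ℝ, 0 < y →
      IntegrableOn (fun y' : ℝ => Θ (y * y') * Θbar (y / y') / (y' : ℂ)) (Set.Ioi 0)) ∧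
    ∀ y : ℝ, 0 < y → G (1 / y) = y * G y := by
  have : NeZero N := ⟨by omega⟩
  have hN₁ : N ≠ 1 := by omega
  obtain rfl : Θ = thetaSeries ν := funext hΘ
  obtain rfl : Θbar = thetaSeries fun k ↦ conj (ν k) := funext hΘbar
  have hsum := hprim.sum_eq_zero hN₁
  refine ⟨fun y hy ↦ integrableOn_thetaSeries_mul_thetaSeries (ν.map_zero' hN₁) hsum
    (by simp [ν.map_zero' hN₁]) (by rw [← map_sum, hsum, map_zero]) hy, fun y hy ↦ ?_⟩
  rw [hG, hG, ← integral_const_mul]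
  refine setIntegral_congr_fun measurableSet_Ioi fun t ht ↦ fePair_integrand_one_div
    (Nat.cast_pos.mpr (NeZero.pos N)) ?_ (fun _ ↦ hprim.thetaSeries_one_div)
    (fun _ ↦ hprim.thetaSeries_conj_one_div) hy ht
  exact_mod_cast hprim.gaussSum_mul_conj_gaussSum

/-- The Mellin convolution `G(y) = ∫_0^∞ ϑ(iyy',ν) ϑ(iy/y', conj ν) dy'/y'` of the two
ϑ-series of a primitive even Dirichlet character converges for every `y > 0` and transforms
with weight 1 under `y → 1/y`: `G(1/y) = y G(y)`. -/
theorem stmt12 (N : ℕ) (hN : 1 < N) (ν : DirichletCharacter ℂ N)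
    (hprim : ν.IsPrimitive) (heven : ν (-1) = 1)
    (Θ Θbar G : ℝ → ℂ)
    (hΘ : ∀ y : ℝ, Θ y = ∑' n : ℤ, ν (n : ZMod N) *
      ((Real.exp (-Real.pi * (n : ℝ) ^ 2 * y / N) : ℝ) : ℂ))
    (hΘbar : ∀ y : ℝ, Θbar y = ∑' n : ℤ, (starRingEnd ℂ) (ν (n : ZMod N)) *
      ((Real.exp (-Real.pi * (n : ℝ) ^ 2 * y / N) : ℝ) : ℂ))
    (hG : ∀ y : ℝ, G y = ∫ y' in Set.Ioi (0 : ℝ), Θ (y * y') * Θbar (y / y') / (y' : ℂ)) :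
    (∀ y : ℝ, 0 < y →
      IntegrableOn (fun y' : ℝ => Θ (y * y') * Θbar (y / y') / (y' : ℂ)) (Set.Ioi 0)) ∧
    ∀ y : ℝ, 0 < y → G (1 / y) = y * G y :=
  stmt12_general N hN ν hprim Θ Θbar G hΘ hΘbar hG
end

section
/- Let p be a prime and let μ be an additive Haar measure on the p-adic field ℚ_p normalized so that μ(ℤ_p) = 1. Then for every real σ > 0, ∫_{x ∈ ℤ_p} |x|_p^{σ−1} dμ(x) = (1 − 1/p)/(1 − p^{−σ}), and consequently (p/(p−1))·∫_{x ∈ ℤ_p} |x|_p^{σ−1} dμ(x) = 1/(1 − p^{−σ}). -/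
/-!
Write `B n` for the closed ball of radius `p ^ n` in `ℚ_[p]`. It is the disjoint union of the `p`
balls of radius `p ^ (n - 1)` centred at `c * p ^ (-n)`, `0 ≤ c < p`, so any Haar measure gives
`B (-n)` mass `p⁻¹ ^ n * μ ℤ_p` and the sphere `‖x‖ = p ^ (-n)` mass `p⁻¹ ^ n * (1 - p⁻¹) * μ ℤ_p`.
Up to the null set `{0}`, `ℤ_p` is the disjoint union of these spheres, on each of which the
integrand is constant, and summing over them gives the geometric series
`(1 - p⁻¹) * ∑ n, (p ^ (-σ)) ^ n`.
-/

open MeasureTheory Metric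
open scoped ENNReal

lemma Real.zpow_neg_natCast_rpow_sub_one_mul_inv_pow {x : ℝ} (hx : 0 < x) (σ : ℝ) (n : ℕ) :
    (x ^ (-n : ℤ)) ^ (σ - 1) * x⁻¹ ^ n = (x ^ (-σ)) ^ n := by
  rw [zpow_neg, zpow_natCast, ← inv_pow, ← Real.rpow_pow_comm (inv_nonneg.mpr hx.le), ← mul_pow,
    Real.rpow_sub_one (inv_ne_zero hx.ne'), div_mul_cancel₀ _ (inv_ne_zero hx.ne'),
    Real.inv_rpow hx.le, Real.rpow_neg hx.le]

namespace Padic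

variable {p : ℕ} [hp : Fact p.Prime]

lemma closedBall_zpow_eq_biUnion (n : ℤ) :
    closedBall (0 : ℚ_[p]) (p ^ n) =
      ⋃ c ∈ Finset.range p, closedBall ((c : ℚ_[p]) * p ^ (-n)) (p ^ (n - 1)) := by
  have hp1 : 1 ≤ (p : ℝ) := mod_cast hp.out.one_le
  ext x
  simp only [Set.mem_iUnion, Finset.mem_range, exists_prop]
  constructor
  · intro hx
    have hy : ‖x * (p : ℚ_[p]) ^ n‖ ≤ 1 := by
      rw [norm_mul, norm_p_zpow, ← le_div_iff₀ (by positivity), one_div, ← zpow_neg, neg_neg]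
      simpa using hx
    obtain ⟨c, hcp, hc⟩ := PadicInt.exists_mem_range (⟨_, hy⟩ : ℤ_[p])
    refine ⟨c, hcp, ?_⟩
    rw [IsLocalRing.mem_maximalIdeal, PadicInt.mem_nonunits] at hc
    have hc_norm : ‖x * (p : ℚ_[p]) ^ n - c‖ < 1 := hc
    rw [mem_closedBall, dist_eq_norm, ← norm_lt_pow_iff_norm_le_pow_sub_one]
    have : x - c * (p : ℚ_[p]) ^ (-n) = (x * p ^ n - c) * p ^ (-n) := by
      rw [sub_mul, mul_assoc, ← zpow_add₀ (by exact_mod_cast hp.out.ne_zero), add_neg_cancel,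
        zpow_zero, mul_one]
    rw [this, norm_mul, norm_p_zpow, neg_neg]
    exact mul_lt_of_lt_one_left (by positivity) hc_norm
  · rintro ⟨c, -, hc⟩
    have hc0 : (c : ℚ_[p]) * p ^ (-n) ∈ closedBall 0 ((p : ℝ) ^ n) := by
      rw [mem_closedBall_zero_iff, norm_mul, norm_p_zpow, neg_neg]
      exact mul_le_of_le_one_left (by positivity) (by simpa using norm_int_le_one (p := p) c)
    rw [IsUltrametricDist.closedBall_eq_of_mem hc0]
    exact closedBall_subset_closedBall (zpow_le_zpow_right₀ hp1 (by omega)) hc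

lemma pairwiseDisjoint_closedBall_natCast_mul_zpow (n : ℤ) :
    (↑(Finset.range p) : Set ℕ).PairwiseDisjoint
      fun c : ℕ ↦ closedBall ((c : ℚ_[p]) * p ^ (-n)) (p ^ (n - 1)) := by
  intro c hc d hd hcd
  rw [Function.onFun, Set.disjoint_left]
  intro x hxc hxd
  have hp1 : 1 < (p : ℝ) := mod_cast hp.out.one_lt
  have hdist : dist ((c : ℚ_[p]) * p ^ (-n)) (d * p ^ (-n)) < p ^ n :=
    calc _ ≤ max (dist ((c : ℚ_[p]) * p ^ (-n)) x) (dist x (d * p ^ (-n))) :=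
          IsUltrametricDist.dist_triangle_max _ _ _
      _ ≤ p ^ (n - 1) := max_le (by rwa [dist_comm]) hxd
      _ < p ^ n := zpow_lt_zpow_right₀ hp1 (by omega)
  rw [dist_eq_norm, ← sub_mul, norm_mul, norm_p_zpow, neg_neg,
    mul_lt_iff_lt_one_left (by positivity)] at hdist
  have hdvd : (p : ℤ) ∣ (c : ℤ) - d := norm_intCast_lt_one_iff.mp (by simpa using hdist)
  exact hcd ((Nat.modEq_iff_dvd.mpr hdvd).symm.eq_of_lt_of_lt
    (Finset.mem_range.mp hc) (Finset.mem_range.mp hd))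

lemma sphere_zpow_eq_diff (n : ℤ) :
    sphere (0 : ℚ_[p]) (p ^ n) = closedBall 0 (p ^ n) \ closedBall 0 (p ^ (n - 1)) := by
  ext x
  simp only [mem_sphere_zero_iff_norm, Set.mem_sdiff, mem_closedBall_zero_iff,
    ← norm_lt_pow_iff_norm_le_pow_sub_one, not_lt]
  exact le_antisymm_iff

lemma pairwise_disjoint_sphere_zpow_neg_natCast :
    Pairwise (Function.onFun Disjoint fun n : ℕ ↦ sphere (0 : ℚ_[p]) (p ^ (-n : ℤ))) := by
  intro m n hmn
  refine Set.disjoint_left.mpr fun x hm hn ↦ hmn ?_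
  rw [mem_sphere_zero_iff_norm] at hm hn
  have hp1 : 1 < (p : ℝ) := mod_cast hp.out.one_lt
  have := (zpow_right_injective₀ (by positivity) hp1.ne') (hm.symm.trans hn)
  omega

lemma closedBall_one_eq_insert_iUnion_sphere :
    closedBall (0 : ℚ_[p]) 1 = insert 0 (⋃ n : ℕ, sphere 0 (p ^ (-n : ℤ))) := by
  have hp1 : 1 < (p : ℝ) := mod_cast hp.out.one_lt
  ext x
  rcases eq_or_ne x 0 with rfl | hx
  · simp
  simp only [mem_closedBall_zero_iff, Set.mem_insert_iff, hx, false_or, Set.mem_iUnion,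
    mem_sphere_zero_iff_norm, norm_eq_zpow_neg_valuation hx, zpow_le_one_iff_right₀ hp1,
    zpow_right_inj₀ (by positivity : (0 : ℝ) < p) hp1.ne']
  exact ⟨fun h ↦ ⟨x.valuation.toNat, by omega⟩, fun ⟨n, h⟩ ↦ by omega⟩

section Haar

variable [MeasurableSpace ℚ_[p]] [BorelSpace ℚ_[p]] (μ : Measure ℚ_[p]) [μ.IsAddHaarMeasure]

lemma addHaar_closedBall_zpow_eq_mul (n : ℤ) :
    μ (closedBall 0 (p ^ n)) = p * μ (closedBall 0 (p ^ (n - 1))) := by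
  rw [closedBall_zpow_eq_biUnion, measure_biUnion_finset
    (pairwiseDisjoint_closedBall_natCast_mul_zpow n) fun _ _ ↦ measurableSet_closedBall]
  simp [Measure.addHaar_closedBall_center]

lemma addHaar_closedBall_zpow_neg_natCast (n : ℕ) :
    μ (closedBall 0 (p ^ (-n : ℤ))) = (p : ℝ≥0∞)⁻¹ ^ n * μ (closedBall 0 1) := by
  induction n with
  | zero => simp
  | succ n ih =>
    have hp0 : (p : ℝ≥0∞) ≠ 0 := by exact_mod_cast hp.out.ne_zero
    rw [pow_succ, mul_comm _ (p : ℝ≥0∞)⁻¹, mul_assoc, ← ih, addHaar_closedBall_zpow_eq_mul μ (-n),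
      ← mul_assoc, ENNReal.inv_mul_cancel hp0 (ENNReal.natCast_ne_top p), one_mul]
    push_cast
    ring_nf

lemma addHaar_sphere_zpow_neg_natCast (n : ℕ) :
    μ (sphere 0 (p ^ (-n : ℤ))) = (p : ℝ≥0∞)⁻¹ ^ n * (1 - (p : ℝ≥0∞)⁻¹) * μ (closedBall 0 1) := by
  have hp1 : 1 ≤ (p : ℝ) := mod_cast hp.out.one_le
  rw [sphere_zpow_eq_diff, measure_sdiff
    (closedBall_subset_closedBall (zpow_le_zpow_right₀ hp1 (by omega)))
    measurableSet_closedBall.nullMeasurableSet measure_closedBall_lt_top.ne,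
    show -(n : ℤ) - 1 = -(n + 1 : ℕ) by push_cast; ring, addHaar_closedBall_zpow_neg_natCast,
    addHaar_closedBall_zpow_neg_natCast, pow_succ, ← ENNReal.sub_mul fun _ _ ↦
      measure_closedBall_lt_top.ne, ENNReal.mul_sub fun _ _ ↦ by simp [hp.out.ne_zero], mul_one]

lemma closedBall_one_ae_eq_iUnion_sphere :
    closedBall (0 : ℚ_[p]) 1 =ᵐ[μ] ⋃ n : ℕ, sphere 0 (p ^ (-n : ℤ)) := by
  rw [closedBall_one_eq_insert_iUnion_sphere]
  exact insert_ae_eq_self 0 _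

lemma setLIntegral_sphere_norm_rpow (σ : ℝ) (n : ℕ) :
    ∫⁻ x in sphere 0 (p ^ (-n : ℤ)), ENNReal.ofReal (‖x‖ ^ (σ - 1)) ∂μ =
      ENNReal.ofReal (((p : ℝ) ^ (-σ)) ^ n * (1 - (p : ℝ)⁻¹)) * μ (closedBall 0 1) := by
  have hp0 : 0 < (p : ℝ) := mod_cast hp.out.pos
  have hinv : (p : ℝ≥0∞)⁻¹ = ENNReal.ofReal (p⁻¹) := by
    rw [ENNReal.ofReal_inv_of_pos hp0, ENNReal.ofReal_natCast]
  rw [setLIntegral_congr_fun isClosed_sphere.measurableSet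
      fun x hx ↦ by rw [mem_sphere_zero_iff_norm.mp hx],
    setLIntegral_const, addHaar_sphere_zpow_neg_natCast, ← mul_assoc, ← mul_assoc, hinv,
    ← ENNReal.ofReal_pow (by positivity), ← ENNReal.ofReal_one,
    ← ENNReal.ofReal_sub _ (by positivity), ← ENNReal.ofReal_mul (by positivity),
    ← ENNReal.ofReal_mul (by positivity), Real.zpow_neg_natCast_rpow_sub_one_mul_inv_pow hp0]

lemma lintegral_closedBall_one_norm_rpow {σ : ℝ} (hσ : 0 < σ) :
    ∫⁻ x in closedBall 0 1, ENNReal.ofReal (‖x‖ ^ (σ - 1)) ∂μ =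
      ENNReal.ofReal ((1 - (p : ℝ)⁻¹) / (1 - (p : ℝ) ^ (-σ))) * μ (closedBall 0 1) := by
  have hp1 : 1 < (p : ℝ) := mod_cast hp.out.one_lt
  have hq0 : 0 ≤ (p : ℝ) ^ (-σ) := by positivity
  have hq1 : (p : ℝ) ^ (-σ) < 1 := Real.rpow_lt_one_of_one_lt_of_neg hp1 (neg_lt_zero.mpr hσ)
  have hr : 0 ≤ 1 - (p : ℝ)⁻¹ := sub_nonneg.mpr (inv_le_one_of_one_le₀ hp1.le)
  rw [Measure.restrict_congr_set (closedBall_one_ae_eq_iUnion_sphere μ),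
    lintegral_iUnion (fun _ ↦ isClosed_sphere.measurableSet)
      pairwise_disjoint_sphere_zpow_neg_natCast]
  simp_rw [setLIntegral_sphere_norm_rpow]
  rw [ENNReal.tsum_mul_right, ← ENNReal.ofReal_tsum_of_nonneg (fun n ↦ by positivity)
    ((summable_geometric_of_lt_one hq0 hq1).mul_right _), tsum_mul_right,
    tsum_geometric_of_lt_one hq0 hq1, div_eq_inv_mul]

end Haar

end Padic

/-- The local zeta integral: for a Haar measure `μ` on `ℚ_p` with `μ(ℤ_p) = 1` and `σ > 0`,
`∫_{ℤ_p} |x|_p^(σ-1) dμ = (1 - 1/p)/(1 - p^(-σ))`, and hence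
`(p/(p-1)) ∫_{ℤ_p} |x|_p^(σ-1) dμ = 1/(1 - p^(-σ)) = ζ_p(σ)`. -/
theorem stmt14 (p : ℕ) [hp : Fact p.Prime]
    [MeasurableSpace ℚ_[p]] [BorelSpace ℚ_[p]]
    (μ : Measure ℚ_[p]) [μ.IsAddHaarMeasure]
    (hμ : μ {x : ℚ_[p] | ‖x‖ ≤ 1} = 1) (σ : ℝ) (hσ : 0 < σ) :
    (∫ x in {x : ℚ_[p] | ‖x‖ ≤ 1}, ‖x‖ ^ (σ - 1) ∂μ)
        = (1 - 1 / p) / (1 - (p : ℝ) ^ (-σ)) ∧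
    ((p : ℝ) / (p - 1)) * ∫ x in {x : ℚ_[p] | ‖x‖ ≤ 1}, ‖x‖ ^ (σ - 1) ∂μ
        = 1 / (1 - (p : ℝ) ^ (-σ)) := by
  have hp1 : 1 < (p : ℝ) := mod_cast hp.out.one_lt
  have hq1 : (p : ℝ) ^ (-σ) < 1 := Real.rpow_lt_one_of_one_lt_of_neg hp1 (neg_lt_zero.mpr hσ)
  have hball : {x : ℚ_[p] | ‖x‖ ≤ 1} = closedBall 0 1 := by ext; simp
  rw [hball] at hμ ⊢
  have hint : ∫ x in closedBall 0 1, ‖x‖ ^ (σ - 1) ∂μ = (1 - 1 / p) / (1 - (p : ℝ) ^ (-σ)) := by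
    rw [integral_eq_lintegral_of_nonneg_ae (ae_of_all _ fun x ↦ by positivity)
        (measurable_norm.pow_const _).aestronglyMeasurable,
      Padic.lintegral_closedBall_one_norm_rpow μ hσ, hμ, mul_one, ENNReal.toReal_ofReal, one_div]
    exact div_nonneg (sub_nonneg.mpr (inv_le_one_of_one_le₀ hp1.le)) (sub_nonneg.mpr hq1.le)
  refine ⟨hint, ?_⟩
  rw [hint]
  field_simp [(sub_pos.mpr hp1).ne', (sub_pos.mpr hq1).ne']
end

section
/- Let p be a prime and t ∈ ℝ. Set q = p^{1/2 + it} ∈ ℂ (that is, q = exp((1/2 + it)·log p)), A = q/(p·(q − 1)) and B = 1/(q − 1) (note |q| = √p > 1, so q ≠ 1). Then |B − A|² + (p − 2)·|A|² + |1 − A|² = 1. -/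
/-!
Since `|q|² = p`, complex conjugation acts on `q` as `q ↦ p / q`. Writing each `|z|²` as
`z * conj z`, the identity becomes an identity between rational functions of `q` alone,
which is checked by clearing denominators.
-/

open Complex ComplexConjugate

theorem Complex.normSq_exp_half_add_mul_I_mul_log {x : ℝ} (hx : 0 < x) (t : ℝ) :
    normSq (exp ((1 / 2 + t * I) * Real.log x)) = x := by
  rw [← Complex.sq_norm, norm_exp, ← Real.exp_nat_mul]
  convert Real.exp_log hx using 2
  simp

theorem Complex.conj_eq_div_of_normSq_eq {p : ℝ} {q : ℂ} (hq : normSq q = p) (hq0 : q ≠ 0) :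
    conj q = p / q := by
  rw [eq_div_iff hq0, mul_comm, mul_conj, hq]

theorem sum_norm_sq_mellin_prefactors_eq_one {p : ℝ} (hp : p ≠ 0) {q : ℂ}
    (hq : normSq q = p) (hq1 : q ≠ 1) :
    ‖1 / (q - 1) - q / (p * (q - 1))‖ ^ 2 + (p - 2) * ‖q / (p * (q - 1))‖ ^ 2
      + ‖1 - q / (p * (q - 1))‖ ^ 2 = 1 := by
  have hq0 : q ≠ 0 := by
    rintro rfl
    exact hp (by simpa using hq.symm)
  have hp0 : (p : ℂ) ≠ 0 := ofReal_ne_zero.mpr hp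
  have hq_sub : q - 1 ≠ 0 := sub_ne_zero.mpr hq1
  have hp_sub : (p : ℂ) - q ≠ 0 := by
    have h : (p : ℂ) - q = q * conj (q - 1) := by
      rw [map_sub, map_one, mul_sub, mul_conj, hq, mul_one]
    rw [h]
    exact mul_ne_zero hq0 ((map_ne_zero _).mpr hq_sub)
  apply ofReal_injective
  push_cast [← mul_conj']
  simp only [map_sub, map_div₀, map_mul, map_one, conj_ofReal,
    conj_eq_div_of_normSq_eq hq hq0]
  field_simp
  ring

/-- Unitarity of the Mellin prefactors of the modified Kozyrev wavelets on the imaginary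
axis: with `q = p^(1/2+it)`, `A = q/(p(q-1))`, `B = 1/(q-1)`, one has
`|B - A|² + (p-2)|A|² + |1 - A|² = 1`. -/
theorem stmt18 (p : ℕ) (hp : p.Prime) (t : ℝ) (q A B : ℂ)
    (hq : q = Complex.exp ((1 / 2 + (t : ℂ) * Complex.I) * (Real.log p : ℂ)))
    (hA : A = q / (p * (q - 1))) (hB : B = 1 / (q - 1)) :
    ‖B - A‖ ^ 2 + ((p : ℝ) - 2) * ‖A‖ ^ 2
      + ‖1 - A‖ ^ 2 = 1 := by
  have hq_normSq : normSq q = p :=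
    hq ▸ normSq_exp_half_add_mul_I_mul_log (by exact_mod_cast hp.pos) t
  have hq1 : q ≠ 1 := by
    rintro rfl
    exact hp.one_lt.ne' (by exact_mod_cast (normSq_one ▸ hq_normSq).symm)
  subst hA hB
  simpa using sum_norm_sq_mellin_prefactors_eq_one (by exact_mod_cast hp.ne_zero) hq_normSq hq1
end
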